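/- Let AV = VH + re_mᵀ with H ∈ ℝ^{m×m} unreduced upper Hessenberg, and let ψ be a polynomial of degree at most p = m - k. Then ψ(A) V [e₁,…,e_k] = V ψ(H) [e₁,…,e_k]; that is, the first k columns of ψ(A)V and Vψ(H) coincide. -/

import Mathlib

/-!
Since `A V = V H + E` with `E` supported on the last column, `Aᵈ V` and `V Hᵈ` agree on every
column `j` with `j + d < m`: one more power of `A` replaces `V` by `V H` up to the last column, and
multiplying by the Hessenberg matrix `H` moves information only one column to the left. Expanding
`ψ` in monomials gives the claim for every column `j` with `j + deg ψ < m`.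
-/

open Matrix Polynomial

namespace Matrix

variable {R : Type*} [CommSemiring R] {n m : ℕ}

def IsUpperHessenberg (H : Matrix (Fin m) (Fin m) R) : Prop :=
  ∀ i j : Fin m, (j : ℕ) + 1 < i → H i j = 0

theorem IsUpperHessenberg.mul_apply_congr {ι : Type*} {H : Matrix (Fin m) (Fin m) R}
    (hH : H.IsUpperHessenberg) {X Y : Matrix ι (Fin m) R} {i : ι} {j : Fin m}
    (hXY : ∀ l : Fin m, (l : ℕ) ≤ j + 1 → X i l = Y i l) :
    (X * H) i j = (Y * H) i j := by
  simp only [mul_apply]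
  refine Finset.sum_congr rfl fun l _ => ?_
  by_cases hl : (j : ℕ) + 1 < l
  · rw [hH l j hl, mul_zero, mul_zero]
  · rw [hXY l (by omega)]

variable {A : Matrix (Fin n) (Fin n) R} {V E : Matrix (Fin n) (Fin m) R}
  {H : Matrix (Fin m) (Fin m) R}

theorem pow_mul_apply_eq_mul_pow_apply (hH : H.IsUpperHessenberg) (hfact : A * V = V * H + E)
    (hE : ∀ i (j : Fin m), (j : ℕ) + 1 < m → E i j = 0) (d : ℕ) :
    ∀ j : Fin m, (j : ℕ) + d < m → ∀ i, (A ^ d * V) i j = (V * H ^ d) i j := by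
  induction d with
  | zero => simp
  | succ d ih =>
    intro j hj i
    have hsplit : A ^ (d + 1) * V = A ^ d * V * H + A ^ d * E := by
      rw [pow_succ, Matrix.mul_assoc, hfact, Matrix.mul_add, Matrix.mul_assoc]
    have hEj : (A ^ d * E) i j = 0 := by
      simp [mul_apply, fun l => hE l j (by omega)]
    calc (A ^ (d + 1) * V) i j = (A ^ d * V * H) i j := by
          rw [hsplit, add_apply, hEj, add_zero]
      _ = (V * H ^ d * H) i j := hH.mul_apply_congr fun l hl => ih l (by omega) i
      _ = (V * H ^ (d + 1)) i j := by rw [pow_succ, Matrix.mul_assoc]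

theorem aeval_mul_apply_eq_mul_aeval_apply (hH : H.IsUpperHessenberg)
    (hfact : A * V = V * H + E) (hE : ∀ i (j : Fin m), (j : ℕ) + 1 < m → E i j = 0)
    (ψ : R[X]) (j : Fin m) (hj : (j : ℕ) + ψ.natDegree < m) (i : Fin n) :
    (aeval A ψ * V) i j = (V * aeval H ψ) i j := by
  simp only [aeval_eq_sum_range, Matrix.sum_mul, Matrix.mul_sum, sum_apply, smul_mul,
    Matrix.mul_smul, smul_apply]
  refine Finset.sum_congr rfl fun d hd => ?_
  rw [pow_mul_apply_eq_mul_pow_apply hH hfact hE d j (by have := Finset.mem_range.mp hd; omega) i]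

end Matrix

theorem stmt17 {n k p : ℕ} (hk : 0 < k)
    (A : Matrix (Fin n) (Fin n) ℝ) (V : Matrix (Fin n) (Fin (k + p)) ℝ)
    (H : Matrix (Fin (k + p)) (Fin (k + p)) ℝ) (r : Fin n → ℝ)
    (hhess : ∀ i j : Fin (k + p), (j : ℕ) + 1 < (i : ℕ) → H i j = 0)
    (hfact : A * V = V * H + Matrix.vecMulVec r (Pi.single ⟨k + p - 1, by omega⟩ 1))
    (ψ : Polynomial ℝ) (hdeg : ψ.natDegree ≤ p) :
    ∀ j : Fin (k + p), (j : ℕ) < k →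
      ∀ i : Fin n, ((aeval A ψ) * V) i j = (V * (aeval H ψ)) i j := by
  intro j hj i
  refine aeval_mul_apply_eq_mul_aeval_apply hhess hfact (fun _ j' hj' => ?_) ψ j (by omega) i
  rw [vecMulVec_apply, Pi.single_eq_of_ne (Fin.ne_of_val_ne (by simp; omega)), mul_zero]
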